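/- Let A > 0, B > 0, and define c(d) = B·log₂(1 + A/d²) for d > 0, with inverse c⁻¹(r) = (A/(2^{r/B} − 1))^{1/2} for r > 0. If r_CC > 0 and r_UE ≥ 4·r_CC, then c⁻¹(2·r_CC + r_UE) + c⁻¹(r_CC + r_UE) < c⁻¹(r_CC). -/

import Mathlib

/-!
With `t = 2 ^ (r_CC / B) > 1`, the hypothesis `r_UE ≥ 4 r_CC` gives
`2 ^ ((r_CC + r_UE) / B) - 1 ≥ t ^ 5 - 1 ≥ 5 (t - 1)` by Bernoulli's inequality, so the
factor `4` under the square root halves `c⁻¹`: `c⁻¹(r_CC + r_UE) ≤ c⁻¹(r_CC) / 2`.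
Since `c⁻¹` is strictly decreasing, `c⁻¹(2 r_CC + r_UE)` is strictly smaller still.
-/

/-- Inverse of the LOS capacity `c(d) = B·log₂(1 + A/d²)`. -/
noncomputable def cInv (A B r : ℝ) : ℝ := Real.sqrt (A / (2 ^ (r / B) - 1))

lemma cInv_lt_cInv {A B r s : ℝ} (hA : 0 < A) (hB : 0 < B) (hr : 0 < r) (hrs : r < s) :
    cInv A B s < cInv A B r := by
  have hpos : 0 < (2 : ℝ) ^ (r / B) - 1 := by
    linarith [Real.one_lt_rpow one_lt_two (div_pos hr hB)]
  have hlt : (2 : ℝ) ^ (r / B) < 2 ^ (s / B) :=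
    Real.rpow_lt_rpow_of_exponent_lt one_lt_two (div_lt_div_of_pos_right hrs hB)
  exact Real.sqrt_lt_sqrt (div_nonneg hA.le (by linarith))
    (div_lt_div_of_pos_left hA hpos (by linarith))

lemma cInv_le_cInv {A B r s : ℝ} (hA : 0 < A) (hB : 0 < B) (hr : 0 < r) (hrs : r ≤ s) :
    cInv A B s ≤ cInv A B r := by
  rcases hrs.eq_or_lt with rfl | hlt
  · rfl
  · exact (cInv_lt_cInv hA hB hr hlt).le

lemma two_mul_cInv_five_mul_le {A B r : ℝ} (hA : 0 ≤ A) (hB : 0 < B) (hr : 0 < r) :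
    2 * cInv A B (5 * r) ≤ cInv A B r := by
  set t : ℝ := (2 : ℝ) ^ (r / B) with ht
  have ht1 : 0 < t - 1 := by linarith [Real.one_lt_rpow one_lt_two (div_pos hr hB)]
  have hpow : (2 : ℝ) ^ (5 * r / B) = t ^ 5 := by
    rw [ht, ← Real.rpow_mul_natCast zero_le_two]
    congr 1
    push_cast
    ring
  have hbernoulli : 1 + (5 : ℕ) * (t - 1) ≤ (1 + (t - 1)) ^ 5 :=
    one_add_mul_le_pow (by linarith) 5
  have hfour : 4 * (t - 1) ≤ t ^ 5 - 1 := by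
    push_cast at hbernoulli
    linarith [show 1 + (t - 1) = t by ring]
  calc 2 * cInv A B (5 * r) = Real.sqrt (4 * (A / (t ^ 5 - 1))) := by
        rw [cInv, hpow, Real.sqrt_mul zero_le_four, show (4 : ℝ) = 2 ^ 2 by norm_num,
          Real.sqrt_sq zero_le_two]
    _ ≤ Real.sqrt (A / (t - 1)) := by
        gcongr
        rw [← mul_div_assoc, div_le_div_iff₀ (by linarith) ht1]
        linarith [mul_le_mul_of_nonneg_left hfour hA]

/-- If `r_CC > 0` and `r_UE ≥ 4 r_CC`, then
`c⁻¹(2 r_CC + r_UE) + c⁻¹(r_CC + r_UE) < c⁻¹(r_CC)`. -/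
theorem stmt_0 (A B rCC rUE : ℝ) (hA : 0 < A) (hB : 0 < B)
    (hCC : 0 < rCC) (hUE : 4 * rCC ≤ rUE) :
    cInv A B (2 * rCC + rUE) + cInv A B (rCC + rUE) < cInv A B rCC := by
  have hUE_pos : 0 < rCC + rUE := by linarith
  calc cInv A B (2 * rCC + rUE) + cInv A B (rCC + rUE)
      < cInv A B (rCC + rUE) + cInv A B (rCC + rUE) := by
        gcongr
        exact cInv_lt_cInv hA hB hUE_pos (by linarith)
    _ ≤ 2 * cInv A B (5 * rCC) := by
        rw [← two_mul]
        gcongr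
        exact cInv_le_cInv hA hB (by linarith) (by linarith)
    _ ≤ cInv A B rCC := two_mul_cInv_five_mul_le hA.le hB hCC
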